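/- Let f be L-smooth, β ∈ (0,1), and define z = x/(1−β) − (β/(1−β)) x' for points x, x' ∈ ℝ^d. If f(x) − f* ≤ Δ₀ and f(x') − f* ≤ Δ₀, and ‖x − x'‖ ≤ G/L, then f(z) − f* ≤ Δ₀/(1−β) + βG²/(2(1−β)² L). -/

import Mathlib

open InnerProductSpace intervalIntegral

lemma descent_lemma
    {E : Type*} [NormedAddCommGroup E] [InnerProductSpace ℝ E] [CompleteSpace E]
    (f : E → ℝ) (f' : E → E) (L : ℝ) (hL : 0 ≤ L)
    (hgrad : ∀ x, HasGradientAt f (f' x) x)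
    (hlip : ∀ x y, ‖f' x - f' y‖ ≤ L * ‖x - y‖)
    (x y : E) :
    f y ≤ f x + ⟪f' x, y - x⟫_ℝ + L / 2 * ‖y - x‖ ^ 2 := by
  set v := y - x with hv
  have hline : ∀ t : ℝ, HasDerivAt (fun t : ℝ => f (x + t • v)) ⟪f' (x + t • v), v⟫_ℝ t := by
    intro t
    have h1 : HasDerivAt (fun t : ℝ => x + t • v) v t := by
      simpa using ((hasDerivAt_id t).smul_const v).const_add x
    have h2 := ((hgrad (x + t • v)).hasFDerivAt.comp_hasDerivAt t h1)
    exact (by simpa using h2 : HasDerivAt (f ∘ fun t : ℝ => x + t • v) ⟪f' (x + t • v), v⟫_ℝ t)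
  have hfc : Continuous f' := by
    have : LipschitzWith (Real.toNNReal L) f' :=
      LipschitzWith.of_dist_le_mul fun a b => by
        rw [dist_eq_norm, dist_eq_norm, Real.coe_toNNReal L hL]; exact hlip a b
    exact this.continuous
  have hcont : Continuous (fun t : ℝ => ⟪f' (x + t • v), v⟫_ℝ) := by
    exact (hfc.comp (by continuity)).inner continuous_const
  have hftc : f (x + (1:ℝ) • v) - f (x + (0:ℝ) • v)
      = ∫ t in (0:ℝ)..1, ⟪f' (x + t • v), v⟫_ℝ := by
    rw [intervalIntegral.integral_eq_sub_of_hasDerivAt (fun t _ => hline t)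
      (hcont.intervalIntegrable 0 1)]
  have hcont2 : Continuous (fun t : ℝ => ⟪f' x, v⟫_ℝ + (L * ‖v‖ ^ 2) * t) := by continuity
  have hbound : ∫ t in (0:ℝ)..1, ⟪f' (x + t • v), v⟫_ℝ
      ≤ ∫ t in (0:ℝ)..1, (⟪f' x, v⟫_ℝ + (L * ‖v‖ ^ 2) * t) := by
    apply intervalIntegral.integral_mono_on (by norm_num) (hcont.intervalIntegrable 0 1)
      (hcont2.intervalIntegrable 0 1)
    intro t ht
    have key : ⟪f' (x + t • v) - f' x, v⟫_ℝ ≤ L * ‖v‖ ^ 2 * t := by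
      calc ⟪f' (x + t • v) - f' x, v⟫_ℝ ≤ ‖f' (x + t • v) - f' x‖ * ‖v‖ :=
            real_inner_le_norm _ _
        _ ≤ (L * ‖(x + t • v) - x‖) * ‖v‖ := by
            gcongr; exact hlip _ _
        _ = L * (|t| * ‖v‖) * ‖v‖ := by simp [norm_smul, Real.norm_eq_abs]
        _ = L * ‖v‖ ^ 2 * t := by rw [abs_of_nonneg ht.1]; ring
    rw [inner_sub_left] at key
    linarith
  have hint : ∫ t in (0:ℝ)..1, (⟪f' x, v⟫_ℝ + (L * ‖v‖ ^ 2) * t)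
      = ⟪f' x, v⟫_ℝ + L / 2 * ‖v‖ ^ 2 := by
    rw [intervalIntegral.integral_add (g := fun t : ℝ => (L * ‖v‖ ^ 2) * t) intervalIntegrable_const
      ((continuous_const.mul continuous_id').intervalIntegrable 0 1),
      intervalIntegral.integral_const_mul]
    simp [integral_id]
    ring
  have h0 : x + (0:ℝ) • v = x := by simp
  have h1 : x + (1:ℝ) • v = y := by simp [hv]
  rw [h0, h1] at hftc
  linarith

theorem auxiliary_iterate_function_value_bound
    {E : Type*} [NormedAddCommGroup E] [InnerProductSpace ℝ E] [CompleteSpace E]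
    (f : E → ℝ) (f' : E → E) (L β Δ₀ G fstar : ℝ)
    (hL : 0 < L) (hβ : β ∈ Set.Ioo (0:ℝ) 1) (hΔ : 0 ≤ Δ₀) (hG : 0 ≤ G)
    (hgrad : ∀ x, HasGradientAt f (f' x) x)
    (hlip : ∀ x y, ‖f' x - f' y‖ ≤ L * ‖x - y‖)
    (hfs : ∀ y, fstar ≤ f y)
    (x x' z : E) (hz : z = (1 / (1 - β)) • x - (β / (1 - β)) • x')
    (hx : f x - fstar ≤ Δ₀) (hx' : f x' - fstar ≤ Δ₀)
    (hdist : ‖x - x'‖ ≤ G / L) :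
    f z - fstar ≤ Δ₀ / (1 - β) + β * G ^ 2 / (2 * (1 - β) ^ 2 * L) := by
  obtain ⟨hβ0, hβ1⟩ := hβ
  have h1β : (0:ℝ) < 1 - β := by linarith
  set c := β / (1 - β) with hc
  have hc0 : 0 < c := div_pos hβ0 h1β
  have hzx : z - x = c • (x - x') := by
    rw [hz, hc]
    have : (1 / (1 - β)) • x - (β / (1 - β)) • x' - x
        = ((1 / (1 - β)) - 1) • x - (β / (1 - β)) • x' := by
      rw [sub_smul, one_smul]; abel
    rw [this]
    have h2 : 1 / (1 - β) - 1 = β / (1 - β) := by field_simp; ring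
    rw [h2, smul_sub]
  have hd1 := descent_lemma f f' L hL.le hgrad hlip x z
  have hd2 := descent_lemma f f' L hL.le hgrad hlip x x'
  rw [hzx] at hd1
  rw [inner_smul_right, norm_smul, Real.norm_eq_abs, abs_of_pos hc0] at hd1
  -- hd1 : f z ≤ f x + c * ⟪f' x, x - x'⟫ + L/2 * (c * ‖x-x'‖)^2
  have hinner : ⟪f' x, x - x'⟫_ℝ ≤ f x - f x' + L / 2 * ‖x - x'‖ ^ 2 := by
    have : ⟪f' x, x' - x⟫_ℝ = - ⟪f' x, x - x'⟫_ℝ := by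
      rw [← inner_neg_right]; congr 1; abel
    rw [this] at hd2
    have hnn : ‖x' - x‖ = ‖x - x'‖ := norm_sub_rev _ _
    rw [hnn] at hd2
    linarith
  set D := ‖x - x'‖ with hD
  have hD0 : 0 ≤ D := norm_nonneg _
  have hDG : D * D ≤ (G / L) * (G / L) := mul_le_mul hdist hdist hD0 (by positivity)
  have hfz : f z ≤ f x + c * (f x - f x' + L / 2 * D ^ 2) + L / 2 * (c * D) ^ 2 := by
    nlinarith [hd1, hinner, hc0]
  have hkey : f z - fstar ≤ (1 + c) * Δ₀ + L / 2 * (c + c ^ 2) * D ^ 2 := by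
    have h3 := hfs x'
    nlinarith [hfz, hx, hx', hc0.le, sq_nonneg D]
  have e1 : 1 + c = 1 / (1 - β) := by rw [hc]; field_simp; ring
  have e2 : c + c ^ 2 = β / (1 - β) ^ 2 := by rw [hc]; field_simp; ring
  have hDsq : D ^ 2 ≤ G ^ 2 / L ^ 2 := by
    rw [pow_two, pow_two, pow_two, div_mul_div_comm] at *
    exact hDG
  calc f z - fstar ≤ (1 + c) * Δ₀ + L / 2 * (c + c ^ 2) * D ^ 2 := hkey
    _ ≤ (1 / (1 - β)) * Δ₀ + L / 2 * (β / (1 - β) ^ 2) * (G ^ 2 / L ^ 2) := by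
        rw [e1, e2]
        gcongr
    _ = Δ₀ / (1 - β) + β * G ^ 2 / (2 * (1 - β) ^ 2 * L) := by
        field_simp
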